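/- (TMHP length.) Let 0 < v < 1, let s = (x_s, y_s) and f = (x_f, y_f) be points in ℝ², and let Q = {q₁, …, qₙ} be a finite set of points in ℝ². For p = (X,Y), q = (x,y) ∈ ℝ² define T_v(p,q) := (√((1−v²)(X−x)² + (Y−y)²) − v(Y−y))/(1−v²), and define TMHP_v(s,Q,f) as the minimum, over all orderings q_{σ(1)}, …, q_{σ(n)} of the elements of Q, of T_v(s, q_{σ(1)}) + Σ_{i=1}^{n−1} T_v(q_{σ(i)}, q_{σ(i+1)}) + T_v(q_{σ(n)}, f). Define g : ℝ² → ℝ² by g(x,y) = (x/√(1−v²), y/(1−v²)). Then TMHP_v(s,Q,f) = EMHP(g(s), g(Q), g(f)) + v(y_f − y_s)/(1−v²), where g(Q) denotes the image of Q under g. -/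

import Mathlib

/-- The minimum interception time for a unit-speed vehicle at `p = (X,Y)`
to catch a target starting at `q = (x,y)` moving with velocity `(0,v)`. -/
noncomputable def Tv (v : ℝ) (p q : ℝ × ℝ) : ℝ :=
  (Real.sqrt ((1 - v ^ 2) * (p.1 - q.1) ^ 2 + (p.2 - q.2) ^ 2) - v * (p.2 - q.2)) / (1 - v ^ 2)

/-- The coordinate transformation `g(x,y) = (x/√(1−v²), y/(1−v²))`, valued in
the Euclidean plane. -/
noncomputable def gmap (v : ℝ) (p : ℝ × ℝ) : EuclideanSpace ℝ (Fin 2) :=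
  (WithLp.equiv 2 (Fin 2 → ℝ)).symm ![p.1 / Real.sqrt (1 - v ^ 2), p.2 / (1 - v ^ 2)]

/-- Total interception time along a list of initial target positions,
visited in order. -/
noncomputable def TPath (v : ℝ) : List (ℝ × ℝ) → ℝ
  | [] => 0
  | [_] => 0
  | p :: q :: rest => Tv v p q + TPath v (q :: rest)

/-- `TMHP v s Q f`: the minimum, over all orderings of the finite set `Q`, of
the total interception time starting at `s`, visiting every target of `Q`
exactly once, and finishing at the (translating) point `f`. -/
noncomputable def TMHP (v : ℝ) (s : ℝ × ℝ) (Q : Finset (ℝ × ℝ)) (f : ℝ × ℝ) : ℝ :=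
  sInf {c : ℝ | ∃ l : List (ℝ × ℝ), l.Nodup ∧ (∀ x, x ∈ l ↔ x ∈ Q) ∧
    c = TPath v (s :: (l ++ [f]))}

/-- Euclidean length of a polygonal path through a list of points. -/
noncomputable def pathLength : List (EuclideanSpace ℝ (Fin 2)) → ℝ
  | [] => 0
  | [_] => 0
  | p :: q :: rest => ‖q - p‖ + pathLength (q :: rest)

/-- `EMHP s Q f`: the minimum, over all orderings of the finite set `Q`, of the
Euclidean length of the path starting at `s`, visiting every point of `Q`
exactly once, and terminating at `f`. -/
noncomputable def EMHP (s : EuclideanSpace ℝ (Fin 2)) (Q : Finset (EuclideanSpace ℝ (Fin 2)))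
    (f : EuclideanSpace ℝ (Fin 2)) : ℝ :=
  sInf {c : ℝ | ∃ l : List (EuclideanSpace ℝ (Fin 2)), l.Nodup ∧ (∀ x, x ∈ l ↔ x ∈ Q) ∧
    c = pathLength (s :: (l ++ [f]))}

noncomputable instance : DecidableEq (EuclideanSpace ℝ (Fin 2)) := Classical.decEq _

/-!
Write `c = 1 - v²`. The interception time splits as
`T_v(p, q) = ‖g q - g p‖ + v (y_q - y_p) / c`: a Euclidean distance after the change of
coordinates `g`, plus a potential difference. Along any route from `s` to `f` the potential
terms telescope to `v (y_f - y_s) / c`, whatever the ordering, and since `g` is injective the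
orderings of `Q` correspond to those of `g(Q)`.
-/

open Function

def orderings {α : Type*} (Q : Finset α) : Set (List α) :=
  {l | l.Nodup ∧ ∀ x, x ∈ l ↔ x ∈ Q}

theorem orderings_nonempty {α : Type*} (Q : Finset α) : (orderings Q).Nonempty :=
  ⟨Q.toList, Q.nodup_toList, fun _ => Finset.mem_toList⟩

theorem orderings_image {α β : Type*} [DecidableEq β] {g : α → β} (hg : Injective g)
    (Q : Finset α) : orderings (Q.image g) = List.map g '' orderings Q := by
  ext l'
  constructor
  · rintro ⟨hnd, hmem⟩
    have hrange : l' ∈ Set.range (List.map g) := by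
      rw [Set.range_list_map]
      intro x hx
      obtain ⟨a, -, rfl⟩ := Finset.mem_image.1 ((hmem x).1 hx)
      exact Set.mem_range_self a
    obtain ⟨l, rfl⟩ := hrange
    refine ⟨l, ⟨hnd.of_map g, fun a => ?_⟩, rfl⟩
    rw [← List.mem_map_of_injective hg, hmem, hg.mem_finset_image]
  · rintro ⟨l, ⟨hnd, hmem⟩, rfl⟩
    refine ⟨hnd.map hg, fun x => ?_⟩
    simp only [List.mem_map, Finset.mem_image, hmem]

theorem csInf_image_add_const {ι M : Type*} [ConditionallyCompleteLattice M] [AddGroup M]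
    [AddRightMono M] {S : Set ι} {F : ι → M} (hne : S.Nonempty) (hbdd : BddBelow (F '' S))
    (K : M) : sInf ((fun i => F i + K) '' S) = sInf (F '' S) + K := by
  rw [← Set.image_image (· + K)]
  exact ((OrderIso.addRight K).map_csInf' (hne.image F) hbdd).symm

theorem pathLength_nonneg : ∀ l : List (EuclideanSpace ℝ (Fin 2)), 0 ≤ pathLength l
  | [] | [_] => le_rfl
  | p :: q :: rest => add_nonneg (norm_nonneg (q - p)) (pathLength_nonneg (q :: rest))

theorem TMHP_eq_sInf_image (v : ℝ) (s : ℝ × ℝ) (Q : Finset (ℝ × ℝ)) (f : ℝ × ℝ) :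
    TMHP v s Q f = sInf ((fun l => TPath v (s :: (l ++ [f]))) '' orderings Q) := by
  simp only [TMHP, orderings, Set.image, Set.mem_ofPred_eq, and_assoc, eq_comm]

theorem EMHP_eq_sInf_image (s : EuclideanSpace ℝ (Fin 2))
    (Q : Finset (EuclideanSpace ℝ (Fin 2))) (f : EuclideanSpace ℝ (Fin 2)) :
    EMHP s Q f = sInf ((fun l => pathLength (s :: (l ++ [f]))) '' orderings Q) := by
  simp only [EMHP, orderings, Set.image, Set.mem_ofPred_eq, and_assoc, eq_comm]

section
variable {v : ℝ}

theorem gmap_apply_zero (p : ℝ × ℝ) : gmap v p 0 = p.1 / √(1 - v ^ 2) := rfl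

theorem gmap_apply_one (p : ℝ × ℝ) : gmap v p 1 = p.2 / (1 - v ^ 2) := rfl

theorem gmap_injective (hv : v ^ 2 < 1) : Injective (gmap v) := by
  intro p q h
  have hc : 0 < 1 - v ^ 2 := sub_pos.2 hv
  have h0 := congrArg (· 0) h
  have h1 := congrArg (· 1) h
  simp only [gmap_apply_zero, gmap_apply_one] at h0 h1
  exact Prod.ext ((div_left_inj' (by positivity)).1 h0) ((div_left_inj' hc.ne').1 h1)

theorem norm_gmap_sub (hv : v ^ 2 < 1) (p q : ℝ × ℝ) :
    ‖gmap v q - gmap v p‖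
      = √((1 - v ^ 2) * (p.1 - q.1) ^ 2 + (p.2 - q.2) ^ 2) / (1 - v ^ 2) := by
  have hc : 0 < 1 - v ^ 2 := sub_pos.2 hv
  have hsq : ‖(gmap v q - gmap v p) 0‖ ^ 2 + ‖(gmap v q - gmap v p) 1‖ ^ 2
      = ((1 - v ^ 2) * (p.1 - q.1) ^ 2 + (p.2 - q.2) ^ 2) / (1 - v ^ 2) ^ 2 := by
    simp only [PiLp.sub_apply, gmap_apply_zero, gmap_apply_one, Real.norm_eq_abs, sq_abs]
    rw [← sub_div, ← sub_div, div_pow, Real.sq_sqrt hc.le]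
    field_simp
    ring
  rw [EuclideanSpace.norm_eq, Fin.sum_univ_two, hsq, Real.sqrt_div' _ (sq_nonneg _),
    Real.sqrt_sq hc.le]

theorem Tv_eq_norm_gmap_sub_add (hv : v ^ 2 < 1) (p q : ℝ × ℝ) :
    Tv v p q = ‖gmap v q - gmap v p‖ + v * (q.2 - p.2) / (1 - v ^ 2) := by
  rw [Tv, norm_gmap_sub hv]
  ring

theorem TPath_eq_pathLength_add (hv : v ^ 2 < 1) (b : ℝ × ℝ) :
    ∀ (l : List (ℝ × ℝ)) (a : ℝ × ℝ), TPath v (a :: (l ++ [b]))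
      = pathLength (gmap v a :: (l.map (gmap v) ++ [gmap v b])) + v * (b.2 - a.2) / (1 - v ^ 2)
  | [], a => by
    simp only [List.nil_append, List.map_nil, TPath, pathLength, Tv_eq_norm_gmap_sub_add hv]
    ring
  | c :: l, a => by
    simp only [List.cons_append, List.map_cons, TPath, pathLength,
      TPath_eq_pathLength_add hv b l c, Tv_eq_norm_gmap_sub_add hv]
    ring

end

/-- TMHP length:
`TMHP_v(s,Q,f) = EMHP(g(s), g(Q), g(f)) + v(y_f − y_s)/(1 − v²)`. -/
theorem stmt3 (v : ℝ) (hv0 : 0 < v) (hv1 : v < 1) (s f : ℝ × ℝ) (Q : Finset (ℝ × ℝ)) :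
    TMHP v s Q f
      = EMHP (gmap v s) (Q.image (gmap v)) (gmap v f) + v * (f.2 - s.2) / (1 - v ^ 2) := by
  have hv : v ^ 2 < 1 := by nlinarith
  rw [TMHP_eq_sInf_image, EMHP_eq_sInf_image, orderings_image (gmap_injective hv), Set.image_image]
  simp only [TPath_eq_pathLength_add hv]
  refine csInf_image_add_const (orderings_nonempty Q) ⟨0, ?_⟩ _
  rintro _ ⟨l, -, rfl⟩
  exact pathLength_nonneg _
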